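/- arXiv:1608.01361 — 3 statements merged into one kernel-verified Lean document; each statement's English description precedes it below -/
import Mathlib

section
/- Let φ(x) = x² + 1 over a number field K. For every positive integer n, the polynomial P_n(x) := φ^n(x) - x (the n-th iterate of φ minus x) has only simple roots in an algebraic closure of Q. -/
/-!
A root `r` of `φ^n(x) - x` is a periodic point of `φ(x) = x² + 1`, hence a root of a monic
integer polynomial, so `r` and its whole orbit are algebraic integers. By the chain rule a
multiple root would give `2^n · r · φ(r) ⋯ φ^{n-1}(r) = 1`, making `1/2^n` an algebraic
integer, which is impossible for `n ≥ 1`.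
-/

open Polynomial

section IterateComp

variable {R A : Type*} [CommRing R] [CommRing A] [Algebra R A]

theorem aeval_iterate_comp_X (q : R[X]) (n : ℕ) (r : A) :
    aeval r ((fun p : R[X] => p.comp q)^[n] X) = (fun x : A => aeval x q)^[n] r := by
  induction n generalizing r with
  | zero => simp
  | succ n ih =>
    rw [Function.iterate_succ_apply', aeval_comp, ih, ← Function.iterate_succ_apply]

theorem aeval_derivative_iterate_comp_X (q : R[X]) (n : ℕ) (r : A) :
    aeval r (derivative ((fun p : R[X] => p.comp q)^[n] X)) =
      ∏ k ∈ Finset.range n, aeval ((fun x : A => aeval x q)^[k] r) (derivative q) := by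
  induction n generalizing r with
  | zero => simp
  | succ n ih =>
    rw [Function.iterate_succ_apply', derivative_comp, map_mul, aeval_comp, ih,
      Finset.prod_range_succ', mul_comm]
    simp only [Function.iterate_succ_apply, Function.iterate_zero_apply]

theorem IsIntegral.iterate_aeval {r : A} (hr : IsIntegral R r) (q : R[X]) (n : ℕ) :
    IsIntegral R ((fun x : A => aeval x q)^[n] r) := by
  induction n with
  | zero => exact hr
  | succ n ih =>
    rw [Function.iterate_succ_apply']
    simpa only [aeval_subalgebra_coe, mem_integralClosure_iff] using
      (aeval (⟨_, ih⟩ : integralClosure R A) q).2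

theorem Polynomial.Monic.iterate_comp_X [IsDomain R] {q : R[X]} (hq : q.Monic)
    (hdeg : q.natDegree ≠ 0) (n : ℕ) : ((fun p : R[X] => p.comp q)^[n] X).Monic ∧
      ((fun p : R[X] => p.comp q)^[n] X).natDegree = q.natDegree ^ n := by
  induction n with
  | zero => simp [monic_X]
  | succ n ih =>
    rw [Function.iterate_succ_apply', natDegree_comp, ih.2, pow_succ]
    exact ⟨ih.1.comp hq hdeg, rfl⟩

theorem isIntegral_of_isPeriodicPt [IsDomain R] {q : R[X]} (hq : q.Monic)
    (hdeg : 1 < q.natDegree) {n : ℕ} (hn : 1 ≤ n) {r : A}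
    (hr : (fun x : A => aeval x q).IsPeriodicPt n r) :
    IsIntegral R r := by
  obtain ⟨hmonic, hnatDeg⟩ := hq.iterate_comp_X (by omega) n
  refine ⟨(fun p : R[X] => p.comp q)^[n] X - X, hmonic.sub_of_left ?_, ?_⟩
  · rw [degree_X, degree_eq_natDegree hmonic.ne_zero, hnatDeg]
    exact_mod_cast Nat.one_lt_pow (by omega) hdeg
  · rw [← aeval_def, map_sub, aeval_iterate_comp_X, hr.eq, aeval_X, sub_self]

end IterateComp

theorem isUnit_of_intCast_mul_eq_one {A : Type*} [Field A] [CharZero A] {m : ℤ} {y : A}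
    (hy : IsIntegral ℤ y) (h : (m : A) * y = 1) : IsUnit m := by
  have hm : (m : ℚ) ≠ 0 := by rintro hm; simp [Int.cast_eq_zero.mp hm] at h
  have hy' : y = algebraMap ℚ A (m : ℚ)⁻¹ := by
    rw [map_inv₀, map_intCast]; exact eq_inv_of_mul_eq_one_right h
  rw [hy', isIntegral_algebraMap_iff (algebraMap ℚ A).injective,
    IsIntegrallyClosed.isIntegral_iff] at hy
  obtain ⟨k, hk⟩ := hy
  refine IsUnit.of_mul_eq_one k (Int.cast_injective (α := ℚ) ?_)
  rw [eq_intCast] at hk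
  push_cast
  rw [hk, mul_inv_cancel₀ hm]

/-- For `φ(x) = x² + 1` over a number field `K`, the polynomial
`P_n(x) = φ^n(x) - x` has only simple roots in an algebraic closure:
at every root the derivative is nonzero. -/
theorem stmt_1 (K : Type*) [Field K] [NumberField K] (n : ℕ) (hn : 1 ≤ n) :
    ∀ r : AlgebraicClosure K,
      aeval r ((fun p : Polynomial K => p.comp (X ^ 2 + 1))^[n] X - X) = 0 →
      aeval r (derivative ((fun p : Polynomial K => p.comp (X ^ 2 + 1))^[n] X - X)) ≠ 0 := by
  intro r hroot hsimple
  set φ := fun x : AlgebraicClosure K => x ^ 2 + 1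
  have hφK : (fun x => aeval x (X ^ 2 + 1 : K[X])) = φ := by funext; simp [φ]
  have hφZ : (fun x => aeval x (X ^ 2 + 1 : ℤ[X])) = φ := by funext; simp [φ]
  have hdeg : (X ^ 2 + 1 : ℤ[X]).natDegree = 2 := by compute_degree!
  have hperiodic : φ.IsPeriodicPt n r := by
    rwa [map_sub, aeval_iterate_comp_X, aeval_X, sub_eq_zero, hφK] at hroot
  have hint : IsIntegral ℤ r :=
    isIntegral_of_isPeriodicPt (by monicity!) (by rw [hdeg]; norm_num) hn (hφZ ▸ hperiodic)
  have horbit : IsIntegral ℤ (∏ k ∈ Finset.range n, φ^[k] r) :=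
    IsIntegral.prod _ fun k _ => hφZ ▸ hint.iterate_aeval (X ^ 2 + 1) k
  rw [derivative_sub, derivative_X, map_sub, aeval_derivative_iterate_comp_X, hφK, map_one,
    sub_eq_zero] at hsimple
  have hprod : ((2 ^ n : ℤ) : AlgebraicClosure K) * ∏ k ∈ Finset.range n, φ^[k] r = 1 := by
    rw [← hsimple]
    simp [Finset.prod_mul_distrib, one_add_one_eq_two, map_ofNat]
  have h2 : IsUnit (2 : ℤ) :=
    (isUnit_pow_iff (by omega)).mp (isUnit_of_intCast_mul_eq_one horbit hprod)
  norm_num [Int.isUnit_iff] at h2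
end

section
/- Let φ(x) = x² + 1. For every positive integer n, there exists β in the algebraic closure of Q that is periodic under φ with exact period n (i.e. φ^n(β) = β and φ^k(β) ≠ β for 1 ≤ k < n). -/
/-!
Write `φ(x) = x ^ 2 + 1`. A point with `φⁿ(x) = x` but of smaller exact period is a root of
`φ^(n/p)(x) - x` for a prime `p ∣ n`, and there are at most `∑ₚ 2^(n/p) < 2ⁿ` such points.
On the other hand `φⁿ(x) - x` has `2ⁿ` distinct roots: its derivative is `2 A - 1` with `A` an
integer polynomial, so at a repeated root `β`, which is an algebraic integer, the algebraic
integer `A(β)` would equal `1/2`.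
-/

open Polynomial Function

namespace Polynomial

variable (R : Type*) [CommRing R]

noncomputable def sqAddOneIter : ℕ → R[X]
  | 0 => X
  | n + 1 => sqAddOneIter n ^ 2 + 1

variable {R}

theorem eval_sqAddOneIter (n : ℕ) (x : R) :
    (sqAddOneIter R n).eval x = (fun y : R => y ^ 2 + 1)^[n] x := by
  induction n with
  | zero => simp [sqAddOneIter]
  | succ n ih => simp [sqAddOneIter, iterate_succ_apply', ih]

theorem map_sqAddOneIter {S : Type*} [CommRing S] (f : R →+* S) (n : ℕ) :
    (sqAddOneIter R n).map f = sqAddOneIter S n := by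
  induction n with
  | zero => simp [sqAddOneIter]
  | succ n ih => simp [sqAddOneIter, ih]

theorem exists_derivative_sqAddOneIter_sub_X_eq {n : ℕ} (hn : n ≠ 0) :
    ∃ A : R[X], derivative (sqAddOneIter R n - X) = 2 * A - 1 := by
  obtain ⟨m, rfl⟩ := Nat.exists_eq_succ_of_ne_zero hn
  refine ⟨sqAddOneIter R m * derivative (sqAddOneIter R m), ?_⟩
  simp [sqAddOneIter, derivative_sq, mul_assoc, map_ofNat]

variable [Nontrivial R]

theorem isMonicOfDegree_sqAddOneIter (n : ℕ) : IsMonicOfDegree (sqAddOneIter R n) (2 ^ n) := by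
  induction n with
  | zero => exact isMonicOfDegree_X R
  | succ n ih =>
    rw [pow_succ]
    exact (ih.pow 2).add_right (by simp)

theorem isMonicOfDegree_sqAddOneIter_sub_X {n : ℕ} (hn : n ≠ 0) :
    IsMonicOfDegree (sqAddOneIter R n - X) (2 ^ n) :=
  (isMonicOfDegree_sqAddOneIter n).sub <|
    natDegree_X_le.trans_lt (Nat.one_lt_two_pow hn)

theorem natDegree_sqAddOneIter_sub_X_le (n : ℕ) : (sqAddOneIter R n - X).natDegree ≤ 2 ^ n :=
  (natDegree_sub_le _ _).trans <|
    max_le (isMonicOfDegree_sqAddOneIter n).natDegree_eq.le (natDegree_X_le.trans n.one_le_two_pow)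

end Polynomial

theorem not_isIntegral_int_inv_two {K : Type*} [Field K] [CharZero K] :
    ¬ IsIntegral ℤ (2⁻¹ : K) := by
  intro h
  rw [← map_ofNat (algebraMap ℚ K) 2, ← map_inv₀,
    isIntegral_algebraMap_iff (algebraMap ℚ K).injective, IsIntegrallyClosed.isIntegral_iff] at h
  obtain ⟨y, hy⟩ := h
  rw [algebraMap_int_eq, eq_intCast] at hy
  have : (2 * y : ℚ) = 1 := by rw [hy]; norm_num
  norm_cast at this
  omega

theorem Function.IsPeriodicPt.exists_mem_primeFactors_isPeriodicPt_div {α : Type*}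
    {f : α → α} {n : ℕ} {x : α} (hx : IsPeriodicPt f n x) (hn : n ≠ 0)
    (hmin : minimalPeriod f x ≠ n) : ∃ p ∈ n.primeFactors, IsPeriodicPt f (n / p) x := by
  obtain ⟨k, hk⟩ := hx.minimalPeriod_dvd
  have hk1 : k ≠ 1 := by rintro rfl; exact hmin (by rw [hk, mul_one])
  obtain ⟨p, hp, j, rfl⟩ := Nat.exists_prime_and_dvd hk1
  refine ⟨p, Nat.mem_primeFactors.2 ⟨hp, hk ▸ (dvd_mul_right p j).mul_left _, hn⟩, ?_⟩
  rw [hk, mul_left_comm, Nat.mul_div_cancel_left _ hp.pos]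
  exact (isPeriodicPt_minimalPeriod f x).mul_const j

theorem Nat.sum_primeFactors_pow_div_lt {m n : ℕ} (hm : 2 ≤ m) (hn : n ≠ 0) :
    ∑ p ∈ n.primeFactors, m ^ (n / p) < m ^ n := by
  have hinj : Set.InjOn (n / ·) n.primeFactors := fun p hp q hq hpq => by
    rw [← Nat.div_div_self (Nat.dvd_of_mem_primeFactors hp) hn, ← Nat.div_div_self
      (Nat.dvd_of_mem_primeFactors hq) hn]
    exact congrArg (n / ·) hpq
  rw [← Finset.sum_image hinj]
  refine Nat.geomSum_lt hm fun d hd => ?_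
  obtain ⟨p, hp, rfl⟩ := Finset.mem_image.1 hd
  exact Nat.div_lt_self (Nat.pos_of_ne_zero hn) (Nat.prime_of_mem_primeFactors hp).one_lt

namespace Polynomial

theorem nodup_roots_map_of_derivative_eq_two_mul_sub_one {K : Type*} [Field K]
    [CharZero K] {P A : ℤ[X]} (hP : P.Monic) (hA : derivative P = 2 * A - 1) :
    (P.map (algebraMap ℤ K)).roots.Nodup := by
  classical
  refine Multiset.nodup_iff_count_le_one.2 fun β => ?_
  rw [count_roots]
  by_contra! h
  obtain ⟨hroot, hderiv⟩ := (one_lt_rootMultiplicity_iff_isRoot (hP.map _).ne_zero).1 h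
  have hβ : IsIntegral ℤ β := ⟨P, hP, by rwa [IsRoot, eval_map] at hroot⟩
  have hAβ : IsIntegral ℤ (aeval β A) :=
    adjoin_le_integralClosure hβ (aeval_mem_adjoin_singleton ℤ β)
  have hhalf : aeval β A = 2⁻¹ := by
    rw [IsRoot, derivative_map, hA, eval_map_algebraMap, map_sub, map_mul, map_one, map_ofNat,
      sub_eq_zero] at hderiv
    exact eq_inv_of_mul_eq_one_right hderiv
  exact not_isIntegral_int_inv_two (hhalf ▸ hAβ)

variable {K : Type*} [Field K]

theorem mem_roots_sqAddOneIter_sub_X {n : ℕ} (hn : n ≠ 0) {x : K} :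
    x ∈ (sqAddOneIter K n - X).roots ↔ IsPeriodicPt (fun y : K => y ^ 2 + 1) n x := by
  rw [mem_roots (isMonicOfDegree_sqAddOneIter_sub_X hn).ne_zero, IsRoot, eval_sub,
    eval_sqAddOneIter, eval_X, sub_eq_zero]
  rfl

theorem nodup_roots_sqAddOneIter_sub_X [CharZero K] {n : ℕ} (hn : n ≠ 0) :
    (sqAddOneIter K n - X).roots.Nodup := by
  obtain ⟨A, hA⟩ := exists_derivative_sqAddOneIter_sub_X_eq (R := ℤ) hn
  simpa [Polynomial.map_sub, map_sqAddOneIter] using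
    nodup_roots_map_of_derivative_eq_two_mul_sub_one (K := K)
      (isMonicOfDegree_sqAddOneIter_sub_X hn).monic hA

theorem card_roots_toFinset_sqAddOneIter_sub_X [IsAlgClosed K] [CharZero K] [DecidableEq K]
    {n : ℕ} (hn : n ≠ 0) : (sqAddOneIter K n - X).roots.toFinset.card = 2 ^ n := by
  rw [Multiset.toFinset_card_of_nodup (nodup_roots_sqAddOneIter_sub_X hn),
    ← (IsAlgClosed.splits _).natDegree_eq_card_roots,
    (isMonicOfDegree_sqAddOneIter_sub_X hn).natDegree_eq]

theorem card_roots_toFinset_sqAddOneIter_sub_X_le [DecidableEq K] (n : ℕ) :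
    (sqAddOneIter K n - X).roots.toFinset.card ≤ 2 ^ n :=
  (Multiset.toFinset_card_le _).trans <| (card_roots' _).trans <| natDegree_sqAddOneIter_sub_X_le n

end Polynomial

theorem exists_minimalPeriod_sq_add_one_eq {K : Type*} [Field K] [IsAlgClosed K] [CharZero K]
    {n : ℕ} (hn : n ≠ 0) : ∃ β : K, minimalPeriod (fun x : K => x ^ 2 + 1) β = n := by
  classical
  let roots (m : ℕ) : Finset K := (sqAddOneIter K m - X).roots.toFinset
  have hcard : (n.primeFactors.biUnion fun p => roots (n / p)).card < (roots n).card :=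
    calc _ ≤ ∑ p ∈ n.primeFactors, (roots (n / p)).card := Finset.card_biUnion_le
      _ ≤ ∑ p ∈ n.primeFactors, 2 ^ (n / p) :=
        Finset.sum_le_sum fun p _ => card_roots_toFinset_sqAddOneIter_sub_X_le _
      _ < 2 ^ n := Nat.sum_primeFactors_pow_div_lt le_rfl hn
      _ = (roots n).card := (card_roots_toFinset_sqAddOneIter_sub_X hn).symm
  obtain ⟨β, hβ, hβ_not_mem⟩ := Finset.exists_mem_notMem_of_card_lt_card hcard
  refine ⟨β, by_contra fun hmin => hβ_not_mem ?_⟩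
  obtain ⟨p, hp, hβp⟩ := ((mem_roots_sqAddOneIter_sub_X hn).1
    (Multiset.mem_toFinset.1 hβ)).exists_mem_primeFactors_isPeriodicPt_div hn hmin
  have hnp : n / p ≠ 0 :=
    (Nat.div_pos (Nat.le_of_mem_primeFactors hp) (Nat.pos_of_mem_primeFactors hp)).ne'
  exact Finset.mem_biUnion.2
    ⟨p, hp, Multiset.mem_toFinset.2 ((mem_roots_sqAddOneIter_sub_X hnp).2 hβp)⟩

/-- For `φ(x) = x² + 1` and every positive integer `n`, there exists `β` in the
algebraic closure of `ℚ` that is periodic under `φ` with exact period `n`. -/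
theorem stmt_2 (n : ℕ) (hn : 1 ≤ n) :
    ∃ β : AlgebraicClosure ℚ,
      (fun x : AlgebraicClosure ℚ => x ^ 2 + 1)^[n] β = β ∧
      ∀ k, 1 ≤ k → k < n → (fun x : AlgebraicClosure ℚ => x ^ 2 + 1)^[k] β ≠ β := by
  obtain ⟨β, hβ⟩ :=
    exists_minimalPeriod_sq_add_one_eq (K := AlgebraicClosure ℚ) (n := n) (by omega)
  refine ⟨β, hβ ▸ isPeriodicPt_minimalPeriod _ β, fun k hk hkn => ?_⟩
  exact not_isPeriodicPt_of_pos_of_lt_minimalPeriod (by omega) (hβ ▸ hkn)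
end

section
/- Let K be the rational function field C(t) and φ(x) = x² + t ∈ K[x]. For every positive integer n and every root r of P_n(x) := φ^n(x) - x in an algebraic closure of K, we have P_n'(r) ≠ 0; consequently φ^n(x) - x has only simple roots. -/
open Polynomial FunctionField

noncomputable section
open Classical

private abbrev Kb := RatFunc ℂ
private abbrev Lb := AlgebraicClosure (RatFunc ℂ)
private def Gq : Polynomial Kb := X ^ 2 + C RatFunc.X
private def GF (n : ℕ) : Polynomial Kb := (fun p : Polynomial Kb => p.comp Gq)^[n] X
private def Gt : Lb := algebraMap Kb Lb RatFunc.X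
private def Gphi (x : Lb) : Lb := x ^ 2 + Gt

private lemma aeval_Gq (x : Lb) : aeval x Gq = Gphi x := by
  simp [Gq, Gphi, Gt, RatFunc.algebraMap_apply]

private lemma aeval_GF (n : ℕ) (x : Lb) : aeval x (GF n) = Gphi^[n] x := by
  induction n generalizing x with
  | zero => simp [GF]
  | succ n ih =>
    have h : GF (n + 1) = (GF n).comp Gq := Function.iterate_succ_apply' _ n X
    rw [h, aeval_comp, aeval_Gq, ih, ← Function.iterate_succ_apply]

private lemma aeval_deriv_GF (n : ℕ) (x : Lb) :
    aeval x (derivative (GF (n + 1))) = aeval (Gphi x) (derivative (GF n)) * (2 * x) := by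
  have h : GF (n + 1) = (GF n).comp Gq := Function.iterate_succ_apply' _ n X
  rw [h, derivative_comp, map_mul, aeval_comp, aeval_Gq]
  have hq : aeval x (derivative Gq) = 2 * x := by
    simp only [Gq, derivative_add, derivative_C, derivative_X_pow, add_zero, map_mul, map_pow,
      aeval_X, aeval_C, map_ofNat, pow_one]
    norm_num [map_natCast]
    left
    exact map_ofNat (algebraMap Kb Lb) 2
  rw [hq, mul_comm]

private lemma exists_GB : ∃ B : ValuationSubring Lb, Gt ∉ B ∧ ((2:Lb))⁻¹ ∈ B := by
  classical
  let Ainf : ValuationSubring Kb := (inftyValuation ℂ).valuationSubring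
  let f : Ainf →+* Lb := (algebraMap Kb Lb).comp Ainf.subtype
  let A : LocalSubring Lb := LocalSubring.range f
  obtain ⟨B, hle, hloc⟩ := A.exists_le_valuationSubring
  have hι : Function.Injective (algebraMap Kb Lb) := (algebraMap Kb Lb).injective
  have hXv : ¬ ((inftyValuation ℂ) RatFunc.X ≤ 1) := by
    rw [show (inftyValuation ℂ) RatFunc.X = ((Multiplicative.ofAdd (1:ℤ) : Multiplicative ℤ) : WithZero (Multiplicative ℤ)) from RatFunc.inftyValuation.X (F := ℂ)]
    rw [show (1 : WithZero (Multiplicative ℤ)) = ((Multiplicative.ofAdd (0:ℤ) : Multiplicative ℤ) : WithZero (Multiplicative ℤ)) by rfl]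
    rw [WithZero.coe_le_coe]
    intro h
    exact absurd (Multiplicative.ofAdd_le.mp h) (by omega)
  have hXinv : (RatFunc.X : Kb)⁻¹ ∈ Ainf := by
    show (inftyValuation ℂ) (RatFunc.X)⁻¹ ≤ 1
    rw [map_inv₀, show (inftyValuation ℂ) RatFunc.X = ((Multiplicative.ofAdd (1:ℤ) : Multiplicative ℤ) : WithZero (Multiplicative ℤ)) from RatFunc.inftyValuation.X (F := ℂ)]
    rw [show (1 : WithZero (Multiplicative ℤ)) = ((Multiplicative.ofAdd (0:ℤ) : Multiplicative ℤ) : WithZero (Multiplicative ℤ)) by rfl]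
    rw [← WithZero.coe_inv, WithZero.coe_le_coe, ← ofAdd_neg]
    exact Multiplicative.ofAdd_le.mpr (by omega)
  have hArange : A.toSubring = f.range := rfl
  have htinvA : Gt⁻¹ ∈ A.toSubring := by
    rw [hArange]
    refine ⟨⟨(RatFunc.X)⁻¹, hXinv⟩, ?_⟩
    show algebraMap Kb Lb (RatFunc.X)⁻¹ = Gt⁻¹
    rw [map_inv₀]
    rfl
  have htne : Gt ≠ 0 :=
    fun h => RatFunc.X_ne_zero (hι (h.trans (map_zero (algebraMap Kb Lb)).symm))
  have hnotunit : ¬ IsUnit (⟨Gt⁻¹, htinvA⟩ : A.toSubring) := by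
    intro hu
    obtain ⟨⟨y, hy⟩, hy1⟩ := isUnit_iff_exists_inv.mp hu
    have hprod : Gt⁻¹ * y = 1 := congrArg Subtype.val hy1
    have hyt : y = Gt := by
      field_simp at hprod
      exact hprod
    rw [hArange] at hy
    obtain ⟨⟨a, ha⟩, hfa⟩ := hy
    have : algebraMap Kb Lb a = Gt := by rw [← hyt]; exact hfa
    have : a = RatFunc.X := hι this
    subst this
    exact hXv ha
  refine ⟨B, ?_, ?_⟩
  · intro htB
    apply hnotunit
    have hunitB : IsUnit (Subring.inclusion hle ⟨Gt⁻¹, htinvA⟩) := by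
      apply isUnit_iff_exists_inv.mpr
      exact ⟨⟨Gt, htB⟩, Subtype.ext (inv_mul_cancel₀ htne)⟩
    exact hloc.map_nonunit _ hunitB
  · apply hle
    rw [hArange]
    have h2 : ((2:Kb))⁻¹ ∈ Ainf := by
      show (inftyValuation ℂ) (2:Kb)⁻¹ ≤ 1
      rw [map_inv₀]
      rw [show (2:Kb) = RatFunc.C (2:ℂ) from (map_ofNat RatFunc.C 2).symm]
      rw [show (inftyValuation ℂ) (RatFunc.C (2:ℂ)) = 1 from RatFunc.inftyValuation.C ℂ (two_ne_zero)]
      simp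
    refine ⟨⟨(2:Kb)⁻¹, h2⟩, ?_⟩
    show algebraMap Kb Lb ((2:Kb))⁻¹ = ((2:Lb))⁻¹
    rw [map_inv₀, map_ofNat]


section VB

variable (B : ValuationSubring Lb)

private lemma v2_eq (h2 : ((2:Lb))⁻¹ ∈ B) : B.valuation 2 = 1 := by
  have h2' : (2:Lb) ∈ B := by
    have : ((2:ℕ) : Lb) ∈ B.toSubring := natCast_mem B.toSubring 2
    simpa using this
  have a : B.valuation 2 ≤ 1 := (B.valuation_le_one_iff _).2 h2'
  have b : B.valuation (2:Lb)⁻¹ ≤ 1 := (B.valuation_le_one_iff _).2 h2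
  have h2ne : (2:Lb) ≠ 0 := by
    rw [show (2:Lb) = algebraMap Kb Lb 2 from (map_ofNat _ 2).symm]
    simp only [ne_eq, _root_.map_eq_zero]
    rw [show (2:Kb) = RatFunc.C 2 from (map_ofNat RatFunc.C 2).symm]
    simp only [ne_eq, _root_.map_eq_zero]
    norm_num
  have hm : B.valuation 2 * B.valuation (2:Lb)⁻¹ = 1 := by
    rw [← map_mul, mul_inv_cancel₀ h2ne, map_one]
  refine le_antisymm a ?_
  calc (1 : B.ValueGroup) = B.valuation 2 * B.valuation (2:Lb)⁻¹ := hm.symm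
    _ ≤ B.valuation 2 * 1 := mul_le_mul_right b _
    _ = B.valuation 2 := mul_one _

private lemma vt_big (ht : Gt ∉ B) : 1 < B.valuation Gt := by
  by_contra h
  exact ht ((B.valuation_le_one_iff _).1 (not_lt.mp h))

private lemma vphi_small (ht : Gt ∉ B) {x : Lb} (hx : B.valuation x ≤ 1) :
    B.valuation (Gphi x) = B.valuation Gt := by
  have h1 : B.valuation (x ^ 2) < B.valuation Gt := by
    rw [map_pow]
    exact lt_of_le_of_lt (pow_le_one' hx 2) (vt_big B ht)
  rw [Gphi]
  exact Valuation.map_add_eq_of_lt_right _ h1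

private lemma vphi_big {x : Lb} (hx : B.valuation Gt < B.valuation x ^ 2) :
    B.valuation (Gphi x) = B.valuation x ^ 2 := by
  rw [Gphi]
  rw [← map_pow] at hx ⊢
  exact Valuation.map_add_eq_of_lt_left _ hx

private lemma root_val (ht : Gt ∉ B) {n : ℕ} (hn : 1 ≤ n) {r : Lb}
    (hroot : Gphi^[n] r = r) : 1 < B.valuation r := by
  by_contra hle
  rw [not_lt] at hle
  have hvt := vt_big B ht
  have key : ∀ k : ℕ, B.valuation (Gphi^[k+1] r) = B.valuation Gt ^ (2 ^ k) := by
    intro k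
    induction k with
    | zero => simpa using vphi_small B ht hle
    | succ k ih =>
      have hbig : B.valuation Gt < B.valuation (Gphi^[k+1] r) ^ 2 := by
        rw [ih, ← pow_mul, ← pow_succ]
        calc B.valuation Gt = B.valuation Gt ^ 1 := (pow_one _).symm
          _ < B.valuation Gt ^ (2 ^ (k+1)) := by
              apply pow_lt_pow_right₀ hvt
              exact Nat.one_lt_two_pow (by omega)
      have : Gphi^[k+1+1] r = Gphi (Gphi^[k+1] r) := Function.iterate_succ_apply' _ _ _
      rw [this, vphi_big B hbig, ih, ← pow_mul, ← pow_succ]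
  obtain ⟨m, rfl⟩ : ∃ m, n = m + 1 := ⟨n - 1, by omega⟩
  have : 1 < B.valuation (Gphi^[m+1] r) := by
    rw [key m]
    exact one_lt_pow' hvt (by positivity)
  rw [hroot] at this
  exact absurd hle (not_le.mpr this)

private lemma deriv_val (ht : Gt ∉ B) (h2 : ((2:Lb))⁻¹ ∈ B) {n : ℕ} (hn : 1 ≤ n) :
    ∀ x : Lb, (∀ i, 1 < B.valuation (Gphi^[i] x)) →
      1 < B.valuation (aeval x (derivative (GF n))) := by
  induction n, hn using Nat.le_induction with
  | base =>
    intro x hx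
    rw [aeval_deriv_GF 0 x]
    have h0 : aeval (Gphi x) (derivative (GF 0)) = 1 := by simp [GF]
    rw [h0, one_mul, map_mul, v2_eq B h2, one_mul]
    simpa using hx 0
  | succ n hn ih =>
    intro x hx
    rw [aeval_deriv_GF n x, map_mul, map_mul, v2_eq B h2, one_mul]
    have h1 : 1 < B.valuation (aeval (Gphi x) (derivative (GF n))) := by
      apply ih
      intro i
      rw [← Function.iterate_succ_apply]
      exact hx (i + 1)
    have h2' : 1 < B.valuation x := by simpa using hx 0
    calc (1 : B.ValueGroup) < B.valuation (aeval (Gphi x) (derivative (GF n))) := h1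
      _ ≤ _ := le_mul_of_one_le_right' h2'.le

end VB

private lemma natDegree_GF (n : ℕ) : (GF n).natDegree = 2 ^ n := by
  induction n with
  | zero => simp [GF]
  | succ n ih =>
    have h : GF (n + 1) = (GF n).comp Gq := Function.iterate_succ_apply' _ n X
    have hq : Gq.natDegree = 2 := by
      rw [Gq]
      exact natDegree_X_pow_add_C
    rw [h, natDegree_comp, ih, hq, pow_succ]

private lemma GF_sub_X_ne (n : ℕ) (hn : 1 ≤ n) : GF n - X ≠ 0 := by
  intro h
  have h2 : GF n = X := sub_eq_zero.mp h
  have := natDegree_GF n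
  rw [h2, natDegree_X] at this
  have : 2 ≤ 2 ^ n := Nat.one_lt_two_pow (by omega)
  omega

private lemma gleason_main (n : ℕ) (hn : 1 ≤ n) :
    (∀ r : Lb, aeval r (GF n - X) = 0 → aeval r (derivative (GF n - X)) ≠ 0) ∧
    Squarefree (GF n - X) := by
  obtain ⟨B, ht, h2⟩ := exists_GB
  have part1 : ∀ r : Lb, aeval r (GF n - X) = 0 → aeval r (derivative (GF n - X)) ≠ 0 := by
    intro r hr
    have hroot : Gphi^[n] r = r := by
      rw [map_sub, aeval_X, sub_eq_zero, aeval_GF] at hr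
      exact hr
    have horbit : ∀ i, Gphi^[n] (Gphi^[i] r) = Gphi^[i] r := by
      intro i
      rw [← Function.iterate_add_apply, add_comm, Function.iterate_add_apply, hroot]
    have hbig : ∀ i, 1 < B.valuation (Gphi^[i] r) :=
      fun i => root_val B ht hn (horbit i)
    have hg : 1 < B.valuation (aeval r (derivative (GF n))) :=
      deriv_val B ht h2 hn r hbig
    have hval : B.valuation (aeval r (derivative (GF n - X))) =
        B.valuation (aeval r (derivative (GF n))) := by
      rw [derivative_sub, derivative_X, map_sub, aeval_one, sub_eq_add_neg]
      have hneg : B.valuation (-1 : Lb) < B.valuation (aeval r (derivative (GF n))) := by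
        rw [Valuation.map_neg, map_one]
        exact hg
      exact Valuation.map_add_eq_of_lt_left _ hneg
    intro h0
    rw [h0, map_zero] at hval
    exact absurd (hval ▸ hg) (by simp)
  refine ⟨part1, ?_⟩
  have hP : GF n - X ≠ 0 := GF_sub_X_ne n hn
  have hcop : IsCoprime (GF n - X) (derivative (GF n - X)) := by
    by_contra hcop
    set d := EuclideanDomain.gcd (GF n - X) (derivative (GF n - X)) with hd
    have hdunit : ¬ IsUnit d := fun h => hcop (EuclideanDomain.gcd_isUnit_iff.mp h)
    have hdne : d ≠ 0 := by
      intro h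
      exact hP (EuclideanDomain.gcd_eq_zero_iff.mp (hd ▸ h)).1
    have hddeg : d.degree ≠ 0 := by
      intro h
      exact hdunit (isUnit_iff_degree_eq_zero.mpr h)
    have hmapdeg : (d.map (algebraMap Kb Lb)).degree ≠ 0 := by
      rwa [degree_map]
    obtain ⟨r, hrr⟩ := IsAlgClosed.exists_root _ hmapdeg
    have hr1 : aeval r d = 0 := by
      rwa [aeval_def, ← eval_map]
    have hdvd1 : d ∣ (GF n - X) := EuclideanDomain.gcd_dvd_left _ _
    have hdvd2 : d ∣ derivative (GF n - X) := EuclideanDomain.gcd_dvd_right _ _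
    obtain ⟨e1, he1⟩ := hdvd1
    obtain ⟨e2, he2⟩ := hdvd2
    have hz1 : aeval r (GF n - X) = 0 := by rw [he1, map_mul, hr1, zero_mul]
    have hz2 : aeval r (derivative (GF n - X)) = 0 := by rw [he2, map_mul, hr1, zero_mul]
    exact part1 r hz1 hz2
  exact Polynomial.Separable.squarefree hcop

end

/-- Over `K = ℂ(t)` with `φ(x) = x² + t`, for every `n ≥ 1` the polynomial
`P_n(x) = φ^n(x) - x` has nonvanishing derivative at each of its roots in an
algebraic closure of `K`; consequently it is squarefree (only simple roots). -/
theorem stmt_4 (n : ℕ) (hn : 1 ≤ n) :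
    (∀ r : AlgebraicClosure (RatFunc ℂ),
      aeval r ((fun p : Polynomial (RatFunc ℂ) => p.comp (X ^ 2 + C RatFunc.X))^[n] X - X) = 0 →
      aeval r (derivative
        ((fun p : Polynomial (RatFunc ℂ) => p.comp (X ^ 2 + C RatFunc.X))^[n] X - X)) ≠ 0) ∧
    Squarefree ((fun p : Polynomial (RatFunc ℂ) => p.comp (X ^ 2 + C RatFunc.X))^[n] X - X) := by
  exact gleason_main n hn
end
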